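/- Let f, g : ℕ → Ordinal be functions such that each f(n) and g(n) is a limit ordinal and cof(f(n)) = cof(g(n)) for every n. Consider the products ∏_{n<ω} f(n) and ∏_{n<ω} g(n) ordered by eventual dominance (h ≤* h' iff h(n) ≤ h'(n) for all but finitely many n). Then the two partial orders have cofinal subsets of the same minimal cardinality; i.e. the least cardinality of a cofinal subset of (∏ f(n), ≤*) equals the least cardinality of a cofinal subset of (∏ g(n), ≤*). -/

import Mathlib

/-!
Take fundamental sequences `u` of `p` and `v` of `q`, both of length `cof p = cof q`. Send `x < p`
to `ρ x := v i` for some `i` with `x ≤ u i`, and `y < q` to `π y := u j` for some `j` with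
`y ≤ v j`. As `v` is strictly increasing, `ρ x ≤ y` forces `i ≤ j`, hence `x ≤ π y`.
Coordinatewise, `ρ` carries `∏ f` into `∏ g` and `π` turns a cofinal family of `∏ g` into one
of `∏ f` of no larger size; by symmetry the two cofinalities agree.
-/

/-- The set of functions below `F` pointwise: the product `∏_{n<ω} F n`. -/
def prodBelow (F : ℕ → Ordinal) : Set (ℕ → Ordinal) := {h | ∀ n, h n < F n}

/-- Eventual dominance: `h ≤* h'` iff `h n ≤ h' n` for all but finitely many `n`. -/
def evLE (h h' : ℕ → Ordinal) : Prop := {n : ℕ | h' n < h n}.Finite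

/-- `D` is a cofinal subset of `(∏ F n, ≤*)`. -/
def IsCofinalProd (F : ℕ → Ordinal) (D : Set (ℕ → Ordinal)) : Prop :=
  D ⊆ prodBelow F ∧ ∀ h ∈ prodBelow F, ∃ h' ∈ D, evLE h h'

/-- The least cardinality of a cofinal subset of `(∏ F n, ≤*)`. -/
noncomputable def cofinalityProd (F : ℕ → Ordinal) : Cardinal :=
  sInf {c : Cardinal | ∃ D : Set (ℕ → Ordinal), IsCofinalProd F D ∧ Cardinal.mk ↥D = c}

open Set Cardinal

theorem exists_forall_le_imp_le_of_isCofinal_range {ι α β : Type*} [LinearOrder ι] [Preorder α]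
    [Preorder β] {u : ι → α} {v : ι → β} (hu : Monotone u) (hv : StrictMono v)
    (hu' : IsCofinal (range u)) (hv' : IsCofinal (range v)) :
    ∃ (π : β → α) (ρ : α → β), ∀ x y, ρ x ≤ y → x ≤ π y := by
  choose i hi using fun x => exists_range_iff.1 (hu' x)
  choose j hj using fun y => exists_range_iff.1 (hv' y)
  refine ⟨fun y => u (j y), fun x => v (i x), fun x y hxy => (hi x).trans (hu ?_)⟩
  exact hv.le_iff_le.1 (hxy.trans (hj y))

namespace Ordinal

theorem exists_forall_le_imp_le_of_cof_eq {p q : Ordinal} (h : p.cof = q.cof) :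
    ∃ (π : Iio q → Iio p) (ρ : Iio p → Iio q), ∀ x y, ρ x ≤ y → x ≤ π y := by
  obtain ⟨u, hu⟩ := exists_isFundamentalSeq (o := p) rfl
  obtain ⟨v, hv⟩ := exists_isFundamentalSeq (o := q) (congrArg Cardinal.ord h.symm)
  exact exists_forall_le_imp_le_of_isCofinal_range hu.strictMono.monotone hv.strictMono
    hu.isCofinal_range hv.isCofinal_range

end Ordinal

theorem isCofinalProd_prodBelow (F : ℕ → Ordinal) : IsCofinalProd F (prodBelow F) :=
  ⟨subset_rfl, fun h hh => ⟨h, hh, by simp [evLE]⟩⟩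

theorem cofinalityProd_le_mk {F : ℕ → Ordinal} {D : Set (ℕ → Ordinal)}
    (hD : IsCofinalProd F D) : cofinalityProd F ≤ #D :=
  csInf_le' ⟨D, hD, rfl⟩

theorem exists_isCofinalProd_mk_eq_cofinalityProd (F : ℕ → Ordinal) :
    ∃ D, IsCofinalProd F D ∧ #D = cofinalityProd F :=
  csInf_mem (s := {c | ∃ D, IsCofinalProd F D ∧ #D = c})
    ⟨_, prodBelow F, isCofinalProd_prodBelow F, rfl⟩

theorem cofinalityProd_le_of_cof_eq {f g : ℕ → Ordinal} (hcof : ∀ n, (f n).cof = (g n).cof) :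
    cofinalityProd f ≤ cofinalityProd g := by
  choose π ρ hπρ using fun n => Ordinal.exists_forall_le_imp_le_of_cof_eq (hcof n)
  obtain ⟨D, ⟨hDg, hD⟩, hDcard⟩ := exists_isCofinalProd_mk_eq_cofinalityProd g
  let Φ : D → ℕ → Ordinal := fun h n => π n ⟨h.1 n, hDg h.2 n⟩
  have hΦ : IsCofinalProd f (range Φ) := by
    refine ⟨?_, fun h hh => ?_⟩
    · rintro _ ⟨h, rfl⟩ n
      exact (π n _).2
    · obtain ⟨h', hh'D, hev⟩ := hD (fun n => ρ n ⟨h n, hh n⟩) fun n => (ρ n _).2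
      exact ⟨Φ ⟨h', hh'D⟩, mem_range_self _, hev.subset fun n =>
        lt_imp_lt_of_le_imp_le (hπρ n ⟨h n, hh n⟩ ⟨h' n, hDg hh'D n⟩)⟩
  calc cofinalityProd f ≤ #(range Φ) := cofinalityProd_le_mk hΦ
    _ ≤ #D := mk_range_le
    _ = cofinalityProd g := hDcard

theorem cofinalityProd_eq_of_cof_eq_general (f g : ℕ → Ordinal)
    (hcof : ∀ n, (f n).cof = (g n).cof) :
    cofinalityProd f = cofinalityProd g :=
  (cofinalityProd_le_of_cof_eq hcof).antisymm (cofinalityProd_le_of_cof_eq fun n => (hcof n).symm)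

/-- If each `f n`, `g n` is a limit ordinal with `cof (f n) = cof (g n)`, then the
products `∏ f n` and `∏ g n` ordered by eventual dominance have cofinal subsets of the
same minimal cardinality. -/
theorem cofinalityProd_eq_of_cof_eq (f g : ℕ → Ordinal)
    (hf : ∀ n, Order.IsSuccLimit (f n)) (hg : ∀ n, Order.IsSuccLimit (g n))
    (hcof : ∀ n, (f n).cof = (g n).cof) :
    cofinalityProd f = cofinalityProd g :=
  cofinalityProd_eq_of_cof_eq_general f g hcof
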